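/- Let n ≥ 1, let α_1,…,α_n ≥ 0 with Σ_k α_k = 1, and let d_k, d'_k ∈ (0,1] satisfy d'_k ≤ d_k for all k. Then (Σ_k α_k / d_k)^{-1} − (Σ_k α_k / d'_k)^{-1} ≤ Σ_k (d_k − d'_k)/d_k. -/
import Mathlib


/-- Jump estimate for the weighted harmonic mean: for convex weights α and
d'_k ≤ d_k in (0,1], the drop of the harmonic mean is bounded by the sum of
relative drops (d_k − d'_k)/d_k. -/
theorem stmt_1 (n : ℕ) (hn : 1 ≤ n) (α d d' : Fin n → ℝ)
    (hα : ∀ k, 0 ≤ α k) (hsum : ∑ k, α k = 1)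
    (hd : ∀ k, d k ∈ Set.Ioc (0:ℝ) 1) (hd' : ∀ k, d' k ∈ Set.Ioc (0:ℝ) 1)
    (hle : ∀ k, d' k ≤ d k) :
    (∑ k, α k / d k)⁻¹ - (∑ k, α k / d' k)⁻¹ ≤ ∑ k, (d k - d' k) / d k := by
  set S := ∑ k, α k / d k with hS
  set S' := ∑ k, α k / d' k with hS'
  have hdpos : ∀ k, 0 < d k := fun k => (hd k).1
  have hd'pos : ∀ k, 0 < d' k := fun k => (hd' k).1
  have hS1 : 1 ≤ S := by
    rw [← hsum]
    exact Finset.sum_le_sum fun k _ => by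
      rw [le_div_iff₀ (hdpos k)]
      nlinarith [hα k, (hd k).2, hdpos k]
  have hSpos : 0 < S := lt_of_lt_of_le one_pos hS1
  have hterm' : ∀ k, 0 ≤ α k / d' k := fun k => div_nonneg (hα k) (hd'pos k).le
  have hSS' : S ≤ S' := Finset.sum_le_sum fun k _ =>
    div_le_div_of_nonneg_left (hα k) (hd'pos k) (hle k)
  have hS'pos : 0 < S' := lt_of_lt_of_le hSpos hSS'
  have key : S⁻¹ - S'⁻¹ = ∑ k, (α k / d' k - α k / d k) / (S * S') := by
    rw [← Finset.sum_div, Finset.sum_sub_distrib, ← hS', ← hS]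
    field_simp
  rw [key]
  apply Finset.sum_le_sum
  intro k _
  rcases eq_or_lt_of_le (hα k) with h0 | hpos
  · rw [← h0]
    simp only [zero_div, sub_self, zero_div]
    exact div_nonneg (by linarith [hle k]) (hdpos k).le
  · have hge : α k / d' k ≤ S * S' := by
      calc α k / d' k ≤ S' := Finset.single_le_sum (fun k _ => hterm' k) (Finset.mem_univ k)
        _ = 1 * S' := (one_mul S').symm
        _ ≤ S * S' := by nlinarith
    have hnum : 0 ≤ α k / d' k - α k / d k :=
      sub_nonneg.2 (div_le_div_of_nonneg_left (hα k) (hd'pos k) (hle k))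
    have hαd'pos : 0 < α k / d' k := div_pos hpos (hd'pos k)
    have h1 : (α k / d' k - α k / d k) / (S * S') ≤
        (α k / d' k - α k / d k) / (α k / d' k) := by
      apply div_le_div_of_nonneg_left hnum hαd'pos hge
    have heq : (α k / d' k - α k / d k) / (α k / d' k) = (d k - d' k) / d k := by
      have h1 : α k ≠ 0 := ne_of_gt hpos
      have h2 : d k ≠ 0 := ne_of_gt (hdpos k)
      have h3 : d' k ≠ 0 := ne_of_gt (hd'pos k)
      field_simp
    exact h1.trans heq.le
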